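/- Let V ∈ L¹(ℝ²) be real-valued and satisfy ∫∫_{‖x−y‖<e} |V(x)|·(ln‖x−y‖)²·|V(y)| d(x,y) < ∞. Then ∫_{ℝ²×ℝ²} |V(x)|·G(x,y;α)²·|V(y)| d(x,y) → 0 as α → +∞. -/

import Mathlib

open MeasureTheory Filter

noncomputable def K0 (w : ℝ) : ℝ := ∫ t in Set.Ioi (0 : ℝ), Real.exp (-w * Real.cosh t)

lemma cosh_ge_half (t : ℝ) : (1 + t) / 2 ≤ Real.cosh t := by
  rw [Real.cosh_eq]
  have h1 : 1 + t ≤ Real.exp t := by linarith [Real.add_one_le_exp t]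
  have h2 : 0 < Real.exp (-t) := Real.exp_pos _
  linarith

lemma cosh_ge_exp (t : ℝ) : Real.exp t / 2 ≤ Real.cosh t := by
  rw [Real.cosh_eq]
  have h2 : 0 < Real.exp (-t) := Real.exp_pos _
  linarith

lemma K0_integrable {w : ℝ} (hw : 0 < w) :
    IntegrableOn (fun t => Real.exp (-w * Real.cosh t)) (Set.Ioi 0) := by
  have hg : IntegrableOn (fun t => Real.exp (-(w/2) * t) * Real.exp (-(w/2))) (Set.Ioi 0) :=
    (exp_neg_integrableOn_Ioi 0 (by linarith)).mul_const _
  refine hg.mono' (Continuous.aestronglyMeasurable (by continuity)) ?_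
  refine ae_of_all _ fun t => ?_
  rw [Real.norm_eq_abs, abs_of_pos (Real.exp_pos _), ← Real.exp_add]
  apply Real.exp_le_exp.2
  have := cosh_ge_half t
  nlinarith

lemma K0_nonneg (w : ℝ) : 0 ≤ K0 w :=
  integral_nonneg fun t => (Real.exp_pos _).le

lemma K0_antitone {w₁ w₂ : ℝ} (h1 : 0 < w₁) (h : w₁ ≤ w₂) : K0 w₂ ≤ K0 w₁ := by
  refine setIntegral_mono_on (K0_integrable (lt_of_lt_of_le h1 h)) (K0_integrable h1)
    measurableSet_Ioi fun t ht => ?_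
  apply Real.exp_le_exp.2
  nlinarith [Real.one_le_cosh t]

lemma K0_le_two_div {w : ℝ} (hw : 0 < w) : K0 w ≤ 2 / w := by
  have key : K0 w ≤ ∫ t in Set.Ioi (0:ℝ), Real.exp (-(w/2)) * Real.exp (-(w/2) * t) := by
    refine setIntegral_mono_on (K0_integrable hw)
      (((exp_neg_integrableOn_Ioi 0 (by linarith)).const_mul _)) measurableSet_Ioi
      fun t ht => ?_
    rw [← Real.exp_add]
    apply Real.exp_le_exp.2
    have := cosh_ge_half t
    nlinarith
  have hcomp : ∫ t in Set.Ioi (0:ℝ), Real.exp (-(w/2) * t) = 2 / w := by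
    have hb : 0 < w / 2 := by linarith
    have h := integral_comp_mul_left_Ioi (fun x => Real.exp (-x)) 0 hb
    simp only [mul_zero, integral_exp_neg_Ioi, neg_zero, Real.exp_zero, smul_eq_mul, mul_one]
      at h
    calc ∫ t in Set.Ioi (0:ℝ), Real.exp (-(w/2) * t)
        = ∫ t in Set.Ioi (0:ℝ), Real.exp (-(w/2 * t)) := by
          congr 1; funext t; ring_nf
      _ = (w/2)⁻¹ := h
      _ = 2 / w := by field_simp
  calc K0 w ≤ _ := key
    _ = Real.exp (-(w/2)) * (2 / w) := by rw [integral_const_mul, hcomp]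
    _ ≤ 1 * (2 / w) := by
        apply mul_le_mul_of_nonneg_right _ (by positivity)
        exact Real.exp_le_one_iff.2 (by linarith)
    _ = 2 / w := one_mul _

lemma K0_le_log {w : ℝ} (hw : 0 < w) (hw2 : w ≤ 2) : K0 w ≤ Real.log (2 / w) + 1 := by
  set T := Real.log (2 / w) with hT
  have hT0 : 0 ≤ T := Real.log_nonneg (by rw [le_div_iff₀ hw]; linarith)
  have hsplit : K0 w = (∫ t in Set.Ioc (0:ℝ) T, Real.exp (-w * Real.cosh t))
      + ∫ t in Set.Ioi T, Real.exp (-w * Real.cosh t) := by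
    rw [← setIntegral_union (Set.Ioc_disjoint_Ioi le_rfl) measurableSet_Ioi
      ((K0_integrable hw).mono_set Set.Ioc_subset_Ioi_self)
      ((K0_integrable hw).mono_set (Set.Ioi_subset_Ioi hT0)),
      Set.Ioc_union_Ioi_eq_Ioi hT0]
    rfl
  have h1 : (∫ t in Set.Ioc (0:ℝ) T, Real.exp (-w * Real.cosh t)) ≤ T := by
    have : (∫ t in Set.Ioc (0:ℝ) T, Real.exp (-w * Real.cosh t))
        ≤ ∫ _ in Set.Ioc (0:ℝ) T, (1:ℝ) := by
      refine setIntegral_mono_on ((K0_integrable hw).mono_set Set.Ioc_subset_Ioi_self)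
        (integrableOn_const (by rw [Real.volume_Ioc]; exact ENNReal.ofReal_ne_top))
        measurableSet_Ioc fun t ht => ?_
      apply Real.exp_le_one_iff.2
      nlinarith [Real.one_le_cosh t]
    refine this.trans ?_
    rw [setIntegral_const, measureReal_def, Real.volume_Ioc, smul_eq_mul, mul_one,
      ENNReal.toReal_ofReal (by linarith)]
    linarith
  have h2 : (∫ t in Set.Ioi T, Real.exp (-w * Real.cosh t)) ≤ 1 := by
    have hwT : Real.exp T = 2 / w := Real.exp_log (by positivity)
    have hexp : IntegrableOn (fun t => Real.exp (-t)) (Set.Ioi T) := by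
      simpa using exp_neg_integrableOn_Ioi T one_pos
    have hb : (∫ t in Set.Ioi T, Real.exp (-w * Real.cosh t))
        ≤ ∫ t in Set.Ioi T, Real.exp (T - 1) * Real.exp (-t) := by
      refine setIntegral_mono_on ((K0_integrable hw).mono_set (Set.Ioi_subset_Ioi hT0))
        (hexp.const_mul _) measurableSet_Ioi
        fun t ht => ?_
      rw [← Real.exp_add]
      apply Real.exp_le_exp.2
      have hc : Real.exp (t - T) ≤ w * Real.cosh t := by
        rw [Real.exp_sub, hwT]
        have := cosh_ge_exp t
        rw [div_le_iff₀ (by positivity : (0:ℝ) < 2 / w)]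
        calc Real.exp t ≤ 2 * Real.cosh t := by linarith
          _ = w * Real.cosh t * (2 / w) := by field_simp
      have hd : 1 + (t - T) ≤ Real.exp (t - T) := by linarith [Real.add_one_le_exp (t - T)]
      linarith
    refine hb.trans ?_
    rw [integral_const_mul, integral_exp_neg_Ioi, ← Real.exp_add]
    exact Real.exp_le_one_iff.2 (by linarith)
  linarith

lemma K0_zero_of_nonpos {w : ℝ} (hw : w ≤ 0) : K0 w = 0 := by
  refine integral_undef fun h => ?_
  have h1 : IntegrableOn (fun _ : ℝ => (1:ℝ)) (Set.Ioi 0) := by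
    refine h.mono aestronglyMeasurable_const (ae_of_all _ fun t => ?_)
    rw [Real.norm_eq_abs, Real.norm_eq_abs, abs_one, abs_of_pos (Real.exp_pos _)]
    apply Real.one_le_exp
    nlinarith [Real.one_le_cosh t]
  rw [integrableOn_const_iff] at h1
  rcases h1 with h1 | h1
  · simp at h1
  · simp [Real.volume_Ioi] at h1

lemma K0_measurable : Measurable K0 := by
  have g_anti : Antitone fun s => K0 (Real.exp s) :=
    fun s₁ s₂ h => K0_antitone (Real.exp_pos s₁) (Real.exp_le_exp.2 h)
  have heq : K0 = fun w => if w ≤ 0 then 0 else K0 (Real.exp (Real.log w)) := by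
    funext w
    split_ifs with h
    · exact K0_zero_of_nonpos h
    · rw [Real.exp_log (lt_of_not_ge h)]
  rw [heq]
  exact Measurable.ite measurableSet_Iic measurable_const
    (g_anti.measurable.comp Real.measurable_log)

lemma K0_unif {α r : ℝ} (hα : 1 ≤ α) (hr : 0 < r) :
    K0 (α * r) ≤ 2 + (if r < Real.exp 1 then |Real.log r| else 0) := by
  have hstep : K0 (α * r) ≤ K0 r := K0_antitone hr (le_mul_of_one_le_left hr.le hα)
  have he : (2:ℝ) < Real.exp 1 := by
    have := Real.exp_one_gt_d9; linarith
  by_cases hr2 : r ≤ 2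
  · rw [if_pos (lt_of_le_of_lt hr2 he)]
    have h1 := K0_le_log hr hr2
    have h2 : Real.log (2 / r) = Real.log 2 - Real.log r := Real.log_div two_ne_zero hr.ne'
    have h3 : Real.log 2 ≤ 1 := by
      rw [Real.log_le_iff_le_exp two_pos]; linarith
    linarith [neg_le_abs (Real.log r)]
  · push_neg at hr2
    have h1 : K0 r ≤ 2 / r := K0_le_two_div hr
    have h2 : 2 / r ≤ 1 := by rw [div_le_one hr]; linarith
    have h3 : (0:ℝ) ≤ if r < Real.exp 1 then |Real.log r| else 0 := by
      split_ifs; exacts [abs_nonneg _, le_refl _]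
    linarith

lemma K0_tendsto {r : ℝ} (hr : 0 < r) :
    Tendsto (fun α : ℝ => K0 (α * r)) atTop (nhds 0) := by
  have h2 : Tendsto (fun α : ℝ => 2 / (α * r)) atTop (nhds 0) := by
    have := ((Tendsto.atTop_mul_const hr (tendsto_id (α := ℝ))).inv_tendsto_atTop).const_mul (2:ℝ)
    simpa [div_eq_mul_inv] using this
  refine tendsto_of_tendsto_of_tendsto_of_le_of_le' tendsto_const_nhds h2
    (Eventually.of_forall fun α => K0_nonneg _) ?_
  filter_upwards [eventually_ge_atTop (1:ℝ)] with α hα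
  exact K0_le_two_div (by positivity)


noncomputable def G (x y : EuclideanSpace ℝ (Fin 2)) (α : ℝ) : ℝ :=
  (1 / (2 * Real.pi)) * K0 (α * ‖x - y‖)

/-- If `V ∈ L¹(ℝ²)` is real-valued and satisfies condition (V_roll), then
`∫∫ |V(x)|·G(x,y;α)²·|V(y)| d(x,y) → 0` as `α → +∞`. -/
theorem hilbert_schmidt_norm_tendsto_zero
    (V : EuclideanSpace ℝ (Fin 2) → ℝ) (hV : Integrable V)
    (hroll : ∫⁻ p in {p : EuclideanSpace ℝ (Fin 2) × EuclideanSpace ℝ (Fin 2) |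
        ‖p.1 - p.2‖ < Real.exp 1},
      ENNReal.ofReal (|V p.1| * (Real.log ‖p.1 - p.2‖) ^ 2 * |V p.2|) < ⊤) :
    Tendsto (fun α : ℝ => ∫⁻ p : EuclideanSpace ℝ (Fin 2) × EuclideanSpace ℝ (Fin 2),
        ENNReal.ofReal (|V p.1| * (G p.1 p.2 α) ^ 2 * |V p.2|))
      atTop (nhds 0) := by
  classical
  set c : ℝ := 1 / (2 * Real.pi) with hc
  have hc0 : 0 < c := by rw [hc]; positivity
  set W := hV.1.mk V with hWdef
  have hWm : Measurable W := hV.1.stronglyMeasurable_mk.measurable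
  have hWeq : V =ᵐ[volume] W := hV.1.ae_eq_mk
  have hfst : ∀ᵐ p : (EuclideanSpace ℝ (Fin 2)) × (EuclideanSpace ℝ (Fin 2)) ∂volume, V p.1 = W p.1 := by
    rw [Measure.volume_eq_prod]
    exact Measure.quasiMeasurePreserving_fst.ae hWeq
  have hsnd : ∀ᵐ p : (EuclideanSpace ℝ (Fin 2)) × (EuclideanSpace ℝ (Fin 2)) ∂volume, V p.2 = W p.2 := by
    rw [Measure.volume_eq_prod]
    exact Measure.quasiMeasurePreserving_snd.ae hWeq
  have hDm : MeasurableSet {p : (EuclideanSpace ℝ (Fin 2)) × (EuclideanSpace ℝ (Fin 2)) | p.1 = p.2} :=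
    (isClosed_eq continuous_fst continuous_snd).measurableSet
  have hdiag : ∀ᵐ p : (EuclideanSpace ℝ (Fin 2)) × (EuclideanSpace ℝ (Fin 2)) ∂volume, p.1 ≠ p.2 := by
    rw [ae_iff]
    have hset : {p : (EuclideanSpace ℝ (Fin 2)) × (EuclideanSpace ℝ (Fin 2)) | ¬p.1 ≠ p.2} = {p : (EuclideanSpace ℝ (Fin 2)) × (EuclideanSpace ℝ (Fin 2)) | p.1 = p.2} := by
      ext p; simp
    rw [hset, Measure.volume_eq_prod, Measure.prod_apply hDm]
    have hslice : ∀ x : (EuclideanSpace ℝ (Fin 2)), (Prod.mk x ⁻¹' {p : (EuclideanSpace ℝ (Fin 2)) × (EuclideanSpace ℝ (Fin 2)) | p.1 = p.2}) = {x} := by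
      intro x; ext y; simp [eq_comm]
    simp [hslice, measure_singleton]
  set F : ℝ → (EuclideanSpace ℝ (Fin 2)) × (EuclideanSpace ℝ (Fin 2)) → ENNReal := fun α p =>
    ENNReal.ofReal (|W p.1| * (c * K0 (α * ‖p.1 - p.2‖)) ^ 2 * |W p.2|) with hF
  have hcong : ∀ α : ℝ, (∫⁻ p : (EuclideanSpace ℝ (Fin 2)) × (EuclideanSpace ℝ (Fin 2)),
      ENNReal.ofReal (|V p.1| * (G p.1 p.2 α) ^ 2 * |V p.2|)) = ∫⁻ p, F α p := by
    intro α
    refine lintegral_congr_ae ?_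
    filter_upwards [hfst, hsnd] with p h1 h2
    rw [hF]
    simp only [G]
    rw [h1, h2]
  set S : Set ((EuclideanSpace ℝ (Fin 2)) × (EuclideanSpace ℝ (Fin 2))) := {p | ‖p.1 - p.2‖ < Real.exp 1} with hSdef
  have hSm : MeasurableSet S :=
    (isOpen_lt (continuous_fst.sub continuous_snd).norm continuous_const).measurableSet
  set bound : (EuclideanSpace ℝ (Fin 2)) × (EuclideanSpace ℝ (Fin 2)) → ENNReal := fun p =>
    ENNReal.ofReal (8 * c ^ 2 * (|W p.1| * |W p.2|)) +
      ENNReal.ofReal (2 * c ^ 2) *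
        S.indicator (fun q => ENNReal.ofReal
          (|W q.1| * Real.log ‖q.1 - q.2‖ ^ 2 * |W q.2|)) p with hbdef
  have hnorm : Measurable fun p : (EuclideanSpace ℝ (Fin 2)) × (EuclideanSpace ℝ (Fin 2)) => ‖p.1 - p.2‖ :=
    (continuous_fst.sub continuous_snd).norm.measurable
  have hF_meas : ∀ᶠ α : ℝ in atTop, Measurable (F α) := by
    refine Eventually.of_forall fun α => ?_
    apply Measurable.ennreal_ofReal
    exact ((hWm.comp measurable_fst).abs.mul
      ((measurable_const.mul (K0_measurable.comp (measurable_const.mul hnorm))).pow_const 2)).mul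
      (hWm.comp measurable_snd).abs
  have h_bound : ∀ᶠ α : ℝ in atTop, ∀ᵐ p : (EuclideanSpace ℝ (Fin 2)) × (EuclideanSpace ℝ (Fin 2)) ∂volume, F α p ≤ bound p := by
    filter_upwards [eventually_ge_atTop (1 : ℝ)] with α hα
    filter_upwards [hdiag] with p hp
    have hr : 0 < ‖p.1 - p.2‖ := norm_pos_iff.2 (sub_ne_zero.2 hp)
    set r := ‖p.1 - p.2‖ with hrdef
    set hh : ℝ := if r < Real.exp 1 then |Real.log r| else 0 with hhdef
    have hh0 : 0 ≤ hh := by rw [hhdef]; split_ifs; exacts [abs_nonneg _, le_rfl]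
    have hK := K0_unif hα hr
    have hK0 : 0 ≤ K0 (α * r) := K0_nonneg _
    have hsq : (c * K0 (α * r)) ^ 2 ≤ c ^ 2 * (8 + 2 * hh ^ 2) := by
      have h1 : K0 (α * r) ^ 2 ≤ (2 + hh) ^ 2 := by nlinarith
      have h2 : (2 + hh) ^ 2 ≤ 8 + 2 * hh ^ 2 := by nlinarith [sq_nonneg (hh - 2)]
      have h3 : (c * K0 (α * r)) ^ 2 = c ^ 2 * K0 (α * r) ^ 2 := by ring
      rw [h3]
      nlinarith [mul_le_mul_of_nonneg_left (h1.trans h2) (sq_nonneg c)]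
    have habs1 : (0:ℝ) ≤ |W p.1| := abs_nonneg _
    have habs2 : (0:ℝ) ≤ |W p.2| := abs_nonneg _
    have hreal : |W p.1| * (c * K0 (α * r)) ^ 2 * |W p.2| ≤
        8 * c ^ 2 * (|W p.1| * |W p.2|) + 2 * c ^ 2 * (|W p.1| * hh ^ 2 * |W p.2|) := by
      calc |W p.1| * (c * K0 (α * r)) ^ 2 * |W p.2|
          ≤ |W p.1| * (c ^ 2 * (8 + 2 * hh ^ 2)) * |W p.2| :=
            mul_le_mul_of_nonneg_right (mul_le_mul_of_nonneg_left hsq habs1) habs2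
        _ = 8 * c ^ 2 * (|W p.1| * |W p.2|) + 2 * c ^ 2 * (|W p.1| * hh ^ 2 * |W p.2|) := by ring
    calc F α p ≤ ENNReal.ofReal (8 * c ^ 2 * (|W p.1| * |W p.2|)
          + 2 * c ^ 2 * (|W p.1| * hh ^ 2 * |W p.2|)) := ENNReal.ofReal_le_ofReal hreal
      _ = ENNReal.ofReal (8 * c ^ 2 * (|W p.1| * |W p.2|))
          + ENNReal.ofReal (2 * c ^ 2 * (|W p.1| * hh ^ 2 * |W p.2|)) :=
            ENNReal.ofReal_add (by positivity) (by positivity)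
      _ ≤ bound p := by
          rw [hbdef]
          apply add_le_add_right
          by_cases hpS : p ∈ S
          · have hhr : hh = |Real.log r| := if_pos hpS
            rw [Set.indicator_of_mem hpS, ← ENNReal.ofReal_mul (by positivity : (0:ℝ) ≤ 2 * c ^ 2)]
            apply ENNReal.ofReal_le_ofReal
            rw [hhr, sq_abs]
          · have hhz : hh = 0 := if_neg hpS
            rw [Set.indicator_of_notMem hpS, hhz]
            simp
  have hVlint : (∫⁻ x : (EuclideanSpace ℝ (Fin 2)), ENNReal.ofReal |V x|) < ⊤ := by
    have h := hV.2
    rw [HasFiniteIntegral] at h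
    simpa [← Real.enorm_eq_ofReal_abs] using h
  have hWlint : (∫⁻ x : (EuclideanSpace ℝ (Fin 2)), ENNReal.ofReal |W x|) = ∫⁻ x : (EuclideanSpace ℝ (Fin 2)), ENNReal.ofReal |V x| := by
    refine lintegral_congr_ae ?_
    filter_upwards [hWeq] with x hx
    rw [hx]
  have h_fin : (∫⁻ p : (EuclideanSpace ℝ (Fin 2)) × (EuclideanSpace ℝ (Fin 2)), bound p) ≠ ⊤ := by
    have hmeas1 : Measurable fun p : (EuclideanSpace ℝ (Fin 2)) × (EuclideanSpace ℝ (Fin 2)) =>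
        ENNReal.ofReal (8 * c ^ 2 * (|W p.1| * |W p.2|)) := by
      apply Measurable.ennreal_ofReal
      exact measurable_const.mul ((hWm.comp measurable_fst).abs.mul (hWm.comp measurable_snd).abs)
    rw [hbdef]
    rw [lintegral_add_left hmeas1]
    refine ENNReal.add_ne_top.2 ⟨?_, ?_⟩
    · have heq : ∀ p : (EuclideanSpace ℝ (Fin 2)) × (EuclideanSpace ℝ (Fin 2)), ENNReal.ofReal (8 * c ^ 2 * (|W p.1| * |W p.2|)) =
          ENNReal.ofReal (8 * c ^ 2) *
            (ENNReal.ofReal |W p.1| * ENNReal.ofReal |W p.2|) := by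
        intro p
        rw [← ENNReal.ofReal_mul (abs_nonneg _), ← ENNReal.ofReal_mul (by positivity)]
      simp_rw [heq]
      have hm : Measurable (fun p : EuclideanSpace ℝ (Fin 2) × EuclideanSpace ℝ (Fin 2) =>
          ENNReal.ofReal |W p.1| * ENNReal.ofReal |W p.2|) :=
        ((hWm.comp measurable_fst).abs.ennreal_ofReal).mul
          ((hWm.comp measurable_snd).abs.ennreal_ofReal)
      rw [lintegral_const_mul _ hm]
      rw [Measure.volume_eq_prod, lintegral_prod_mul
        (hWm.abs.ennreal_ofReal.aemeasurable) (hWm.abs.ennreal_ofReal.aemeasurable)]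
      rw [hWlint]
      exact ENNReal.mul_ne_top ENNReal.ofReal_ne_top
        (ENNReal.mul_ne_top hVlint.ne hVlint.ne)
    · have hm2 : Measurable (fun p : EuclideanSpace ℝ (Fin 2) × EuclideanSpace ℝ (Fin 2) =>
          ENNReal.ofReal (|W p.1| * Real.log ‖p.1 - p.2‖ ^ 2 * |W p.2|)) := by
        apply Measurable.ennreal_ofReal
        exact ((hWm.comp measurable_fst).abs.mul
          ((Real.measurable_log.comp hnorm).pow_const 2)).mul
          (hWm.comp measurable_snd).abs
      rw [lintegral_const_mul _ (hm2.indicator hSm), lintegral_indicator hSm _]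
      have hWV : (∫⁻ p in S, ENNReal.ofReal (|W p.1| * Real.log ‖p.1 - p.2‖ ^ 2 * |W p.2|)) =
          ∫⁻ p in S, ENNReal.ofReal (|V p.1| * Real.log ‖p.1 - p.2‖ ^ 2 * |V p.2|) := by
        refine lintegral_congr_ae (ae_restrict_of_ae ?_)
        filter_upwards [hfst, hsnd] with p h1 h2
        rw [h1, h2]
      rw [hWV]
      exact ENNReal.mul_ne_top ENNReal.ofReal_ne_top hroll.ne
  have h_lim : ∀ᵐ p : (EuclideanSpace ℝ (Fin 2)) × (EuclideanSpace ℝ (Fin 2)) ∂volume,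
      Tendsto (fun α : ℝ => F α p) atTop (nhds ((fun _ : (EuclideanSpace ℝ (Fin 2)) × (EuclideanSpace ℝ (Fin 2)) => (0 : ENNReal)) p)) := by
    filter_upwards [hdiag] with p hp
    have hr : 0 < ‖p.1 - p.2‖ := norm_pos_iff.2 (sub_ne_zero.2 hp)
    have hK := K0_tendsto hr
    have h1 : Tendsto (fun α : ℝ => |W p.1| * (c * K0 (α * ‖p.1 - p.2‖)) ^ 2 * |W p.2|) atTop
        (nhds (|W p.1| * (c * 0) ^ 2 * |W p.2|)) :=
      (tendsto_const_nhds.mul ((tendsto_const_nhds.mul hK).pow 2)).mul tendsto_const_nhds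
    have h2 := ENNReal.tendsto_ofReal h1
    simpa [hF] using h2
  have hmain := tendsto_lintegral_filter_of_dominated_convergence (μ := volume)
    (f := fun _ : (EuclideanSpace ℝ (Fin 2)) × (EuclideanSpace ℝ (Fin 2)) => (0 : ENNReal)) bound hF_meas h_bound h_fin h_lim
  rw [lintegral_zero] at hmain
  exact Tendsto.congr (fun α => (hcong α).symm) hmain
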